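/- arXiv:2401.08950 — 3 statements merged into one kernel-verified Lean document; each statement's English description precedes it below -/
import Mathlib

section
/- For pairwise commuting non-identity Paulis P₁, P₂, P₃, G_{P₁, P₂, P₁P₂P₃} = G_{P₁, P₂, P₃}. -/
open Matrix Complex

noncomputable def pauli1 : Fin 4 → Matrix (Fin 2) (Fin 2) ℂ
  | 0 => 1
  | 1 => !![0, 1; 1, 0]
  | 2 => !![0, -Complex.I; Complex.I, 0]
  | 3 => !![1, 0; 0, -1]

noncomputable def nPauli (n : ℕ) (f : Fin n → Fin 4) :
    Matrix (Fin n → Fin 2) (Fin n → Fin 2) ℂ :=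
  Matrix.of fun i j => ∏ k, pauli1 (f k) (i k) (j k)

def PauliSet (n : ℕ) : Set (Matrix (Fin n → Fin 2) (Fin n → Fin 2) ℂ) :=
  Set.range (nPauli n)

noncomputable def gMat {n : ℕ} (P₁ P₂ P₃ : Matrix (Fin n → Fin 2) (Fin n → Fin 2) ℂ) :
    Matrix (Fin n → Fin 2) (Fin n → Fin 2) ℂ :=
  (3/4 : ℂ) • 1 + (1/4 : ℂ) • (P₁ + P₂ + P₃ - P₁*P₂ - P₂*P₃ - P₃*P₁ + P₁*P₂*P₃)

lemma pauli1_sq (a : Fin 4) : pauli1 a * pauli1 a = 1 := by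
  fin_cases a <;>
    · ext i j
      fin_cases i <;> fin_cases j <;>
        simp [pauli1, Matrix.mul_apply, Fin.sum_univ_two, Matrix.one_apply, Complex.I_mul_I]

lemma nPauli_sq (n : ℕ) (f : Fin n → Fin 4) : nPauli n f * nPauli n f = 1 := by
  ext i j
  rw [Matrix.mul_apply]
  simp only [nPauli, Matrix.of_apply]
  have : ∀ m : Fin n → Fin 2,
      (∏ k, pauli1 (f k) (i k) (m k)) * ∏ k, pauli1 (f k) (m k) (j k)
        = ∏ k, pauli1 (f k) (i k) (m k) * pauli1 (f k) (m k) (j k) := by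
    intro m; rw [Finset.prod_mul_distrib]
  rw [Finset.sum_congr rfl fun m _ => this m]
  rw [← Fintype.piFinset_univ,
    ← Finset.prod_univ_sum (t := fun _ : Fin n => (Finset.univ : Finset (Fin 2)))
      (f := fun k x => pauli1 (f k) (i k) x * pauli1 (f k) x (j k))]
  have : ∀ k : Fin n, (∑ x : Fin 2, pauli1 (f k) (i k) x * pauli1 (f k) x (j k))
      = (1 : Matrix (Fin 2) (Fin 2) ℂ) (i k) (j k) := by
    intro k
    rw [← Matrix.mul_apply, pauli1_sq]
  rw [Finset.prod_congr rfl fun k _ => this k]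
  by_cases h : i = j
  · subst h; simp [Matrix.one_apply]
  · obtain ⟨k, hk⟩ := Function.ne_iff.mp h
    rw [Finset.prod_eq_zero (Finset.mem_univ k) (by simp [Matrix.one_apply, hk])]
    simp [Matrix.one_apply, h]

lemma pauli_sq {n : ℕ} {P : Matrix (Fin n → Fin 2) (Fin n → Fin 2) ℂ}
    (h : P ∈ PauliSet n) : P * P = 1 := by
  obtain ⟨f, rfl⟩ := h
  exact nPauli_sq n f

theorem stmt8 (n : ℕ) (P₁ P₂ P₃ : Matrix (Fin n → Fin 2) (Fin n → Fin 2) ℂ)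
    (h₁ : P₁ ∈ PauliSet n) (h₂ : P₂ ∈ PauliSet n) (h₃ : P₃ ∈ PauliSet n)
    (hni₁ : P₁ ≠ 1) (hni₂ : P₂ ≠ 1) (hni₃ : P₃ ≠ 1)
    (hc₁₂ : P₁ * P₂ = P₂ * P₁) (hc₂₃ : P₂ * P₃ = P₃ * P₂) (hc₃₁ : P₃ * P₁ = P₁ * P₃) :
    gMat P₁ P₂ (P₁ * P₂ * P₃) = gMat P₁ P₂ P₃ := by
  have s₁ := pauli_sq h₁
  have s₂ := pauli_sq h₂
  have ha : P₂ * (P₁ * P₂ * P₃) = P₃ * P₁ := by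
    calc P₂ * (P₁ * P₂ * P₃) = (P₂ * P₁) * P₂ * P₃ := by noncomm_ring
    _ = P₁ * (P₂ * P₂) * P₃ := by rw [← hc₁₂]; noncomm_ring
    _ = P₃ * P₁ := by rw [s₂, mul_one, hc₃₁]
  have hb : (P₁ * P₂ * P₃) * P₁ = P₂ * P₃ := by
    calc (P₁ * P₂ * P₃) * P₁ = P₁ * P₂ * (P₃ * P₁) := by noncomm_ring
    _ = P₁ * (P₂ * P₁) * P₃ := by rw [hc₃₁]; noncomm_ring
    _ = (P₁ * P₁) * P₂ * P₃ := by rw [← hc₁₂]; noncomm_ring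
    _ = P₂ * P₃ := by rw [s₁, one_mul]
  have hd : P₁ * P₂ * (P₁ * P₂ * P₃) = P₃ := by
    calc P₁ * P₂ * (P₁ * P₂ * P₃) = P₁ * (P₂ * P₁) * P₂ * P₃ := by noncomm_ring
    _ = (P₁ * P₁) * (P₂ * P₂) * P₃ := by rw [← hc₁₂]; noncomm_ring
    _ = P₃ := by rw [s₁, s₂, one_mul, one_mul]
  unfold gMat
  rw [ha, hb, hd]
  congr 1
  congr 1
  abel
end

section
/- For pairwise commuting non-identity Paulis P₁, P₂, P₃, the ratio G_{P₁,−P₂,P₃}·G_{P₁,P₂,P₃}⁻¹ equals exp(iπP₂/4)·exp(−iπP₁P₂/4)·exp(−iπP₂P₃/4)·exp(iπP₁P₂P₃/4), which is a product of Clifford operators; hence G_{P₁,−P₂,P₃} = G_{P₁,P₂,P₃}·C for some Clifford C. -/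
/-!
Write `Π_x = (1 - x)/2` for the spectral projection of an involution `x` onto its `-1`
eigenspace. For commuting involutions the gate is the reflection
`G_{a,b,d} = 1 - 2 Π_a Π_b Π_d`. Since `Π_{-b} Π_b = 0` and `Π_{-b} + Π_b = 1`, the
product `G_{a,-b,d} G_{a,b,d}` collapses to `1 - 2 Π_a Π_d`, and a direct computation
shows that the product of the four `π/4` rotations equals the same element. Each rotation
`(1 ± iP)/√2` fixes the Paulis commuting with `P` and sends an anticommuting `B` to
`±iPB`, so it is Clifford, and Clifford operators are closed under products.
-/

open Matrix Complex

/-- exp(iπA/4) = (I + iA)/√2 for a Pauli A. -/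
noncomputable def expPauli {n : ℕ} (s : ℂ) (A : Matrix (Fin n → Fin 2) (Fin n → Fin 2) ℂ) :
    Matrix (Fin n → Fin 2) (Fin n → Fin 2) ℂ :=
  ((Real.sqrt 2 : ℂ))⁻¹ • (1 + (s * Complex.I) • A)

namespace Matrix

def piKron {ι κ R : Type*} [Fintype ι] [CommSemiring R] (M : ι → Matrix κ κ R) :
    Matrix (ι → κ) (ι → κ) R :=
  of fun i j => ∏ k, M k (i k) (j k)

lemma piKron_mul {ι κ R : Type*} [Fintype ι] [DecidableEq ι] [Fintype κ] [CommSemiring R]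
    (M N : ι → Matrix κ κ R) : piKron M * piKron N = piKron (M * N) := by
  ext i j
  simp only [piKron, mul_apply, of_apply, Pi.mul_apply, Fintype.prod_sum,
    ← Finset.prod_mul_distrib]

lemma piKron_smul {ι κ R : Type*} [Fintype ι] [CommSemiring R] (c : ι → R)
    (M : ι → Matrix κ κ R) : piKron (fun k => c k • M k) = (∏ k, c k) • piKron M := by
  ext i j
  simp [piKron, Finset.prod_mul_distrib]

lemma piKron_one {ι κ R : Type*} [Fintype ι] [DecidableEq κ] [CommSemiring R] :
    piKron (1 : ι → Matrix κ κ R) = 1 := by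
  ext i j
  simp [piKron, one_apply, Finset.prod_ite_zero, funext_iff]

lemma conjTranspose_piKron {ι κ R : Type*} [Fintype ι] [CommSemiring R] [StarRing R]
    (M : ι → Matrix κ κ R) : (piKron M)ᴴ = piKron fun k => (M k)ᴴ := by
  ext i j
  simp [piKron, conjTranspose_apply]

end Matrix

-- `0, 1, 2, 3` stand for `I, X, Y, Z`: Pauli indices multiply by XOR, and this is the phase.
noncomputable def pauliPhase : Fin 4 → Fin 4 → ℂ
  | 1, 2 => I | 2, 3 => I | 3, 1 => I
  | 2, 1 => -I | 3, 2 => -I | 1, 3 => -I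
  | _, _ => 1

lemma pauli1_mul_pauli1 (a b : Fin 4) :
    pauli1 a * pauli1 b = pauliPhase a b • pauli1 (a ^^^ b) := by
  fin_cases a <;> fin_cases b <;> ext i j <;> fin_cases i <;> fin_cases j <;>
    simp [pauli1, pauliPhase, mul_apply, Fin.sum_univ_two, one_apply]

lemma norm_pauliPhase (a b : Fin 4) : ‖pauliPhase a b‖ = 1 := by
  fin_cases a <;> fin_cases b <;> simp [pauliPhase]

lemma pauliPhase_sq_comm (a b : Fin 4) : pauliPhase a b ^ 2 = pauliPhase b a ^ 2 := by
  fin_cases a <;> fin_cases b <;> simp [pauliPhase]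

lemma conjTranspose_pauli1 (a : Fin 4) : (pauli1 a)ᴴ = pauli1 a := by
  fin_cases a <;> ext i j <;> fin_cases i <;> fin_cases j <;> simp [pauli1, one_apply]

lemma pauliPhase_self (a : Fin 4) : pauliPhase a a = 1 := by
  fin_cases a <;> rfl

section nPauli

variable {n : ℕ}

lemma nPauli_eq_piKron (f : Fin n → Fin 4) : nPauli n f = piKron fun k => pauli1 (f k) := rfl

lemma nPauli_mul (f g : Fin n → Fin 4) :
    nPauli n f * nPauli n g =
      (∏ k, pauliPhase (f k) (g k)) • nPauli n (fun k => f k ^^^ g k) := by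
  simp only [nPauli_eq_piKron, piKron_mul, Pi.mul_def, pauli1_mul_pauli1, piKron_smul]

lemma nPauli_zero : nPauli n 0 = 1 := piKron_one

lemma nPauli_mul_self (f : Fin n → Fin 4) : nPauli n f * nPauli n f = 1 := by
  simp [nPauli_mul, pauliPhase_self, ← Pi.zero_def, nPauli_zero]

lemma conjTranspose_nPauli (f : Fin n → Fin 4) : (nPauli n f)ᴴ = nPauli n f := by
  simp only [nPauli_eq_piKron, conjTranspose_piKron, conjTranspose_pauli1]

lemma nPauli_mul_comm_or_anticomm (f g : Fin n → Fin 4) :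
    nPauli n f * nPauli n g = nPauli n g * nPauli n f ∨
      nPauli n f * nPauli n g = -(nPauli n g * nPauli n f) := by
  have hsq : (∏ k, pauliPhase (f k) (g k)) ^ 2 = (∏ k, pauliPhase (g k) (f k)) ^ 2 := by
    simp only [← Finset.prod_pow, pauliPhase_sq_comm]
  simp only [nPauli_mul, Fin.xor_comm (g _)]
  rcases sq_eq_sq_iff_eq_or_eq_neg.1 hsq with h | h <;> simp [h]

end nPauli

def phasedPauliSet (n : ℕ) : Set (Matrix (Fin n → Fin 2) (Fin n → Fin 2) ℂ) :=
  {M | ∃ (z : ℂ) (B : Matrix (Fin n → Fin 2) (Fin n → Fin 2) ℂ),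
    B ∈ PauliSet n ∧ ‖z‖ = 1 ∧ M = z • B}

section phasedPauliSet

variable {n : ℕ} {M N : Matrix (Fin n → Fin 2) (Fin n → Fin 2) ℂ}

lemma mem_phasedPauliSet_of_mem (h : M ∈ PauliSet n) : M ∈ phasedPauliSet n :=
  ⟨1, M, h, norm_one, (one_smul ℂ M).symm⟩

lemma smul_mem_phasedPauliSet {c : ℂ} (hc : ‖c‖ = 1) (h : M ∈ phasedPauliSet n) :
    c • M ∈ phasedPauliSet n := by
  obtain ⟨z, B, hB, hz, rfl⟩ := h
  exact ⟨c * z, B, hB, by rw [norm_mul, hc, hz, one_mul], smul_smul c z B⟩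

lemma mul_mem_phasedPauliSet (hM : M ∈ phasedPauliSet n) (hN : N ∈ phasedPauliSet n) :
    M * N ∈ phasedPauliSet n := by
  obtain ⟨z, _, ⟨f, rfl⟩, hz, rfl⟩ := hM
  obtain ⟨w, _, ⟨g, rfl⟩, hw, rfl⟩ := hN
  rw [smul_mul_smul_comm, nPauli_mul, smul_smul]
  refine ⟨_, _, ⟨_, rfl⟩, ?_, rfl⟩
  simp [norm_prod, hz, hw, norm_pauliPhase]

lemma mul_comm_or_anticomm_of_mem_phasedPauliSet (hM : M ∈ phasedPauliSet n)
    (hN : N ∈ phasedPauliSet n) : M * N = N * M ∨ M * N = -(N * M) := by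
  obtain ⟨z, _, ⟨f, rfl⟩, -, rfl⟩ := hM
  obtain ⟨w, _, ⟨g, rfl⟩, -, rfl⟩ := hN
  simp only [smul_mul_smul_comm, mul_comm w z]
  rcases nPauli_mul_comm_or_anticomm f g with h | h <;> simp [h]

end phasedPauliSet

lemma IsIdempotentElem.one_sub_two_mul_mul_self {A : Type*} [Ring A] {p : A}
    (hp : IsIdempotentElem p) : (1 - 2 * p) * (1 - 2 * p) = 1 := by
  calc (1 - 2 * p) * (1 - 2 * p) = 1 - 4 * p + 4 * (p * p) := by noncomm_ring
    _ = 1 := by rw [hp.eq]; abel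

lemma inv_sqrt_two_mul_self : ((Real.sqrt 2 : ℂ))⁻¹ * ((Real.sqrt 2 : ℂ))⁻¹ = 2⁻¹ := by
  rw [← mul_inv, ← ofReal_mul, Real.mul_self_sqrt zero_le_two, ofReal_ofNat]

section Algebra

variable {A : Type*} [Ring A] [Algebra ℂ A]

-- `gMat` and `expPauli` over an arbitrary `ℂ`-algebra, so that identities between them can be
-- computed in the commutative subalgebra generated by commuting involutions.
noncomputable def gate (a b d : A) : A :=
  (3/4 : ℂ) • 1 + (1/4 : ℂ) • (a + b + d - a*b - b*d - d*a + a*b*d)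

noncomputable def expQuarter (s : ℂ) (a : A) : A :=
  ((Real.sqrt 2 : ℂ))⁻¹ • (1 + (s * Complex.I) • a)

noncomputable def cliffordCorrection (a b d : A) : A :=
  expQuarter 1 b * expQuarter (-1) (a * b) * expQuarter (-1) (b * d) * expQuarter 1 (a * b * d)

noncomputable def negProj (a : A) : A := (2⁻¹ : ℂ) • (1 - a)

lemma isIdempotentElem_negProj {a : A} (ha : a * a = 1) : IsIdempotentElem (negProj a) := by
  have h : (1 - a) * (1 - a) = (2 : ℂ) • (1 - a) := by
    rw [two_smul]; simp only [sub_mul, mul_sub, one_mul, mul_one, ha]; abel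
  rw [IsIdempotentElem, negProj, smul_mul_smul_comm, h, smul_smul]; norm_num

lemma negProj_neg_add_negProj (a : A) : negProj (-a) + negProj a = 1 := by
  simp only [negProj]; module

lemma negProj_neg_mul_negProj {a : A} (ha : a * a = 1) : negProj (-a) * negProj a = 0 := by
  rw [negProj, negProj, smul_mul_smul_comm, sub_neg_eq_add]
  simp [add_mul, mul_sub, ha, add_comm]

lemma two_mul_negProj (a : A) : 2 * negProj a = 1 - a := by
  rw [negProj, mul_smul_comm, two_mul, ← two_smul ℂ, smul_smul]; norm_num

lemma expQuarter_mul_expQuarter {a : A} (ha : a * a = 1) (s t : ℂ) :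
    expQuarter s a * expQuarter t a = (2⁻¹ * (1 - s * t)) • 1 + (2⁻¹ * (s + t) * I) • a := by
  simp only [expQuarter, smul_mul_smul_comm, inv_sqrt_two_mul_self, add_mul, mul_add, one_mul,
    mul_one, ha]
  match_scalars
  · linear_combination (s * t * 2⁻¹) * I_mul_I
  · ring

lemma expQuarter_mul_expQuarter_neg {a : A} (ha : a * a = 1) {s : ℂ} (hs : s * s = 1) :
    expQuarter s a * expQuarter (-s) a = 1 := by
  rw [expQuarter_mul_expQuarter ha, mul_neg, hs]; norm_num

lemma expQuarter_mul_self {a : A} (ha : a * a = 1) {s : ℂ} (hs : s * s = 1) :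
    expQuarter s a * expQuarter s a = (s * I) • a := by
  rw [expQuarter_mul_expQuarter ha, hs]; norm_num; ring_nf

lemma Commute.expQuarter_left {a b : A} (h : Commute a b) (s : ℂ) :
    Commute (expQuarter s a) b :=
  ((Commute.one_left b).add_left (h.smul_left _)).smul_left _

lemma mul_expQuarter_neg_of_anticomm {a b : A} (h : b * a = -(a * b)) (s : ℂ) :
    b * expQuarter (-s) a = expQuarter s a * b := by
  simp only [expQuarter, mul_smul_comm, smul_mul_assoc, mul_add, add_mul, mul_one, one_mul, h]
  congr 1
  simp only [neg_mul, neg_smul, smul_neg, neg_neg]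

variable {B : Type*} [Ring B] [Algebra ℂ B] (φ : A →ₐ[ℂ] B)

lemma AlgHom.map_gate (a b d : A) : φ (gate a b d) = gate (φ a) (φ b) (φ d) := by
  simp [gate]

lemma AlgHom.map_cliffordCorrection (a b d : A) :
    φ (cliffordCorrection a b d) = cliffordCorrection (φ a) (φ b) (φ d) := by
  simp [cliffordCorrection, expQuarter]

end Algebra

section CommAlgebra

variable {R : Type*} [CommRing R] [Algebra ℂ R] {a b d : R}

lemma gate_eq_one_sub (a b d : R) :
    gate a b d = 1 - 2 * (negProj a * negProj b * negProj d) := by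
  simp only [gate, negProj, smul_mul_smul_comm]
  rw [show (1 - a) * (1 - b) * (1 - d) = 1 - (a + b + d - a*b - b*d - d*a + a*b*d) by ring,
    ← one_add_one_eq_two, ← one_smul ℂ (1 : R), ← add_smul]
  simp only [smul_mul_assoc, one_mul]
  module

lemma gate_mul_self (ha : a * a = 1) (hb : b * b = 1) (hd : d * d = 1) :
    gate a b d * gate a b d = 1 := by
  rw [gate_eq_one_sub]
  exact (((isIdempotentElem_negProj ha).mul (isIdempotentElem_negProj hb)).mul
    (isIdempotentElem_negProj hd)).one_sub_two_mul_mul_self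

lemma gate_neg_mul_gate (ha : a * a = 1) (hb : b * b = 1) (hd : d * d = 1) :
    gate a (-b) d * gate a b d = 1 - 2 * (negProj a * negProj d) := by
  have hpa := (isIdempotentElem_negProj ha).eq
  have hpd := (isIdempotentElem_negProj hd).eq
  have hsum := negProj_neg_add_negProj b
  have horth := negProj_neg_mul_negProj hb
  rw [gate_eq_one_sub, gate_eq_one_sub]
  set pa := negProj a
  set pd := negProj d
  linear_combination (-2 * pa * pd) * hsum + 4 * pa * pd * horth
    + 4 * negProj (-b) * negProj b * pd * pd * hpa + 4 * pa * negProj (-b) * negProj b * hpd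

lemma expQuarter_mul_expQuarter_neg_mul (hb : b * b = 1) {s : ℂ} (hs : s * s = 1) :
    expQuarter s b * expQuarter (-s) (a * b) = negProj (-a) + (s * I) • (b * negProj a) := by
  have hr := congrArg (algebraMap ℂ R) inv_sqrt_two_mul_self
  have hi := congrArg (algebraMap ℂ R) I_mul_I
  have hσ := congrArg (algebraMap ℂ R) hs
  simp only [map_mul, map_neg, map_one] at hr hi hσ
  simp only [expQuarter, negProj, Algebra.smul_def, map_mul, map_neg]
  set r := algebraMap ℂ R (Real.sqrt 2 : ℂ)⁻¹
  set h := algebraMap ℂ R 2⁻¹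
  set i := algebraMap ℂ R I
  set σ := algebraMap ℂ R s
  linear_combination (1 + σ*i*b - σ*i*a*b - σ^2*i^2*a*b^2) * hr - h*σ^2*i^2*a * hb
    - h*a*σ^2 * hi + h*a*hσ

lemma cliffordCorrection_eq_one_sub (ha : a * a = 1) (hb : b * b = 1) (hd : d * d = 1) :
    cliffordCorrection a b d = 1 - 2 * (negProj a * negProj d) := by
  have hbd : b * d * (b * d) = 1 := by linear_combination d * d * hb + hd
  -- The two pairs of rotations are `Π_{-a} + i b Π_a` and `Π_{-a} - i b d Π_a`, with product
  -- `Π_{-a} + d Π_a`.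
  have h₁ := expQuarter_mul_expQuarter_neg_mul (a := a) hb (s := 1) (by norm_num)
  have h₂ := expQuarter_mul_expQuarter_neg_mul (a := a) hbd (s := -1) (by norm_num)
  rw [neg_neg, ← mul_assoc] at h₂
  rw [cliffordCorrection, mul_assoc _ (expQuarter (-1) (b * d)), h₂, h₁]
  have hi := congrArg (algebraMap ℂ R) I_mul_I
  simp only [map_mul, map_neg, map_one] at hi
  have hq := (isIdempotentElem_negProj (neg_mul_neg a a ▸ ha)).eq
  have hp := (isIdempotentElem_negProj ha).eq
  have hsum := negProj_neg_add_negProj a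
  have horth := negProj_neg_mul_negProj ha
  have hpd := two_mul_negProj d
  simp only [Algebra.smul_def, map_neg, one_mul, neg_mul]
  set p := negProj a
  set q := negProj (-a)
  set i := algebraMap ℂ R I
  linear_combination hq + i * b * (1 - d) * horth - i^2 * b^2 * d * hp - b^2 * d * p * hi
    + d * p * hb + hsum + p * hpd

end CommAlgebra

open scoped IsMulCommutative in
theorem gate_identities_of_commute {A : Type*} [Ring A] [Algebra ℂ A] {a b d : A}
    (ha : a * a = 1) (hb : b * b = 1) (hd : d * d = 1)
    (hab : Commute a b) (hbd : Commute b d) (hda : Commute d a) :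
    gate a b d * gate a b d = 1 ∧
      gate a (-b) d * gate a b d = cliffordCorrection a b d ∧
      gate a b d * gate a (-b) d = cliffordCorrection a b d := by
  let S := Algebra.adjoin ℂ ({a, b, d} : Set A)
  have : IsMulCommutative S := Algebra.isMulCommutative_adjoin ℂ <| by
    intro x hx y hy
    simp only [Set.mem_insert_iff, Set.mem_singleton_iff] at hx hy
    rcases hx with rfl | rfl | rfl <;> rcases hy with rfl | rfl | rfl
    exacts [rfl, hab, hda.symm, hab.symm, rfl, hbd, hda, hbd.symm, rfl]
  let a' : S := ⟨a, Algebra.subset_adjoin (by simp)⟩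
  let b' : S := ⟨b, Algebra.subset_adjoin (by simp)⟩
  let d' : S := ⟨d, Algebra.subset_adjoin (by simp)⟩
  have ha' : a' * a' = 1 := Subtype.ext ha
  have hb' : b' * b' = 1 := Subtype.ext hb
  have hd' : d' * d' = 1 := Subtype.ext hd
  have hratio : gate a' (-b') d' * gate a' b' d' = cliffordCorrection a' b' d' :=
    (gate_neg_mul_gate ha' hb' hd').trans (cliffordCorrection_eq_one_sub ha' hb' hd').symm
  have key₁ := congrArg S.val (gate_mul_self ha' hb' hd')
  have key₂ := congrArg S.val hratio
  have key₃ := congrArg S.val ((mul_comm _ _).trans hratio)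
  simp only [map_mul, map_neg, map_one, AlgHom.map_gate, AlgHom.map_cliffordCorrection]
    at key₁ key₂ key₃
  exact ⟨key₁, key₂, key₃⟩

lemma gMat_eq_gate {n : ℕ} (P₁ P₂ P₃ : Matrix (Fin n → Fin 2) (Fin n → Fin 2) ℂ) :
    gMat P₁ P₂ P₃ = gate P₁ P₂ P₃ := rfl

lemma expPauli_eq_expQuarter {n : ℕ} (s : ℂ) (P : Matrix (Fin n → Fin 2) (Fin n → Fin 2) ℂ) :
    expPauli s P = expQuarter s P := rfl

def IsClifford {n : ℕ} (C : Matrix (Fin n → Fin 2) (Fin n → Fin 2) ℂ) : Prop :=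
  ∀ B ∈ PauliSet n, C * B * Cᴴ ∈ phasedPauliSet n

lemma IsClifford.mul {n : ℕ} {C D : Matrix (Fin n → Fin 2) (Fin n → Fin 2) ℂ}
    (hC : IsClifford C) (hD : IsClifford D) : IsClifford (C * D) := by
  intro B hB
  obtain ⟨z, B', hB', hz, h⟩ := hD B hB
  rw [conjTranspose_mul, show C * D * B * (Dᴴ * Cᴴ) = C * (D * B * Dᴴ) * Cᴴ by
    simp only [mul_assoc], h, mul_smul_comm, smul_mul_assoc]
  exact smul_mem_phasedPauliSet hz (hC B' hB')

section Clifford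

variable {n : ℕ} {P Q : Matrix (Fin n → Fin 2) (Fin n → Fin 2) ℂ}

-- Equivalently, `P` is `±` a Pauli operator.
def IsSignedPauli (P : Matrix (Fin n → Fin 2) (Fin n → Fin 2) ℂ) : Prop :=
  P ∈ phasedPauliSet n ∧ Pᴴ = P ∧ P * P = 1

lemma IsSignedPauli.of_mem (h : P ∈ PauliSet n) : IsSignedPauli P := by
  obtain ⟨f, rfl⟩ := h
  exact ⟨mem_phasedPauliSet_of_mem ⟨f, rfl⟩, conjTranspose_nPauli f, nPauli_mul_self f⟩

lemma IsSignedPauli.mul (hP : IsSignedPauli P) (hQ : IsSignedPauli Q) (h : Commute P Q) :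
    IsSignedPauli (P * Q) :=
  ⟨mul_mem_phasedPauliSet hP.1 hQ.1, by rw [conjTranspose_mul, hP.2.1, hQ.2.1, h.eq],
    by rw [mul_assoc, ← mul_assoc Q, ← h.eq, mul_assoc, hQ.2.2, mul_one, hP.2.2]⟩

lemma conjTranspose_expQuarter (hP : Pᴴ = P) {s : ℂ} (hs : star s = s) :
    (expQuarter s P)ᴴ = expQuarter (-s) P := by
  simp [expQuarter, conjTranspose_smul, hP, hs]

lemma isClifford_expQuarter (hP : IsSignedPauli P) {s : ℂ} (hs : s = 1 ∨ s = -1) :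
    IsClifford (expQuarter s P) := by
  obtain ⟨hphase, hherm, hsq⟩ := hP
  have hs_star : star s = s := by rcases hs with rfl | rfl <;> simp
  have hs_sq : s * s = 1 := by rcases hs with rfl | rfl <;> norm_num
  intro B hB
  rw [conjTranspose_expQuarter hherm hs_star, mul_assoc]
  rcases mul_comm_or_anticomm_of_mem_phasedPauliSet (mem_phasedPauliSet_of_mem hB) hphase
    with h | h
  · rw [((Commute.symm h).expQuarter_left (-s)).symm.eq, ← mul_assoc,
      expQuarter_mul_expQuarter_neg hsq hs_sq, one_mul]
    exact mem_phasedPauliSet_of_mem hB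
  · rw [mul_expQuarter_neg_of_anticomm h, ← mul_assoc, expQuarter_mul_self hsq hs_sq,
      smul_mul_assoc]
    refine smul_mem_phasedPauliSet ?_
      (mul_mem_phasedPauliSet hphase (mem_phasedPauliSet_of_mem hB))
    rcases hs with rfl | rfl <;> simp

end Clifford

theorem stmt9_general (n : ℕ) (P₁ P₂ P₃ : Matrix (Fin n → Fin 2) (Fin n → Fin 2) ℂ)
    (h₁ : P₁ ∈ PauliSet n) (h₂ : P₂ ∈ PauliSet n) (h₃ : P₃ ∈ PauliSet n)
    (hc₁₂ : P₁ * P₂ = P₂ * P₁) (hc₂₃ : P₂ * P₃ = P₃ * P₂) (hc₃₁ : P₃ * P₁ = P₁ * P₃) :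
    gMat P₁ (-P₂) P₃ * (gMat P₁ P₂ P₃)⁻¹ =
      expPauli 1 P₂ * expPauli (-1) (P₁ * P₂) * expPauli (-1) (P₂ * P₃) *
        expPauli 1 (P₁ * P₂ * P₃) ∧
    ∃ C : Matrix (Fin n → Fin 2) (Fin n → Fin 2) ℂ,
      (∀ B ∈ PauliSet n, ∃ (z : ℂ) (B' : Matrix (Fin n → Fin 2) (Fin n → Fin 2) ℂ),
        B' ∈ PauliSet n ∧ ‖z‖ = 1 ∧ C * B * Cᴴ = z • B') ∧
      gMat P₁ (-P₂) P₃ = gMat P₁ P₂ P₃ * C := by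
  have c₁₂ : Commute P₁ P₂ := hc₁₂
  have c₂₃ : Commute P₂ P₃ := hc₂₃
  have c₃₁ : Commute P₃ P₁ := hc₃₁
  have hP₁ := IsSignedPauli.of_mem h₁
  have hP₂ := IsSignedPauli.of_mem h₂
  have hP₃ := IsSignedPauli.of_mem h₃
  obtain ⟨hsq, hratio, hratio'⟩ :=
    gate_identities_of_commute hP₁.2.2 hP₂.2.2 hP₃.2.2 c₁₂ c₂₃ c₃₁
  have hC : IsClifford (cliffordCorrection P₁ P₂ P₃) :=
    (((isClifford_expQuarter hP₂ (Or.inl rfl)).mul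
      (isClifford_expQuarter (hP₁.mul hP₂ c₁₂) (Or.inr rfl))).mul
      (isClifford_expQuarter (hP₂.mul hP₃ c₂₃) (Or.inr rfl))).mul
      (isClifford_expQuarter ((hP₁.mul hP₂ c₁₂).mul hP₃ (c₃₁.symm.mul_left c₂₃)) (Or.inl rfl))
  simp only [gMat_eq_gate, expPauli_eq_expQuarter]
  refine ⟨by rw [inv_eq_right_inv hsq]; exact hratio, _, hC, ?_⟩
  rw [← hratio', ← mul_assoc, hsq, one_mul]

/-- G_{P₁,−P₂,P₃}·G_{P₁,P₂,P₃}⁻¹ = exp(iπP₂/4)exp(−iπP₁P₂/4)exp(−iπP₂P₃/4)exp(iπP₁P₂P₃/4),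
a product of Cliffords; hence G_{P₁,−P₂,P₃} = G_{P₁,P₂,P₃}·C for a Clifford C. -/
theorem stmt9 (n : ℕ) (P₁ P₂ P₃ : Matrix (Fin n → Fin 2) (Fin n → Fin 2) ℂ)
    (h₁ : P₁ ∈ PauliSet n) (h₂ : P₂ ∈ PauliSet n) (h₃ : P₃ ∈ PauliSet n)
    (hni₁ : P₁ ≠ 1) (hni₂ : P₂ ≠ 1) (hni₃ : P₃ ≠ 1)
    (hc₁₂ : P₁ * P₂ = P₂ * P₁) (hc₂₃ : P₂ * P₃ = P₃ * P₂) (hc₃₁ : P₃ * P₁ = P₁ * P₃) :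
    gMat P₁ (-P₂) P₃ * (gMat P₁ P₂ P₃)⁻¹ =
      expPauli 1 P₂ * expPauli (-1) (P₁ * P₂) * expPauli (-1) (P₂ * P₃) *
        expPauli 1 (P₁ * P₂ * P₃) ∧
    ∃ C : Matrix (Fin n → Fin 2) (Fin n → Fin 2) ℂ,
      (∀ B ∈ PauliSet n, ∃ (z : ℂ) (B' : Matrix (Fin n → Fin 2) (Fin n → Fin 2) ℂ),
        B' ∈ PauliSet n ∧ ‖z‖ = 1 ∧ C * B * Cᴴ = z • B') ∧
      gMat P₁ (-P₂) P₃ = gMat P₁ P₂ P₃ * C :=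
  stmt9_general n P₁ P₂ P₃ h₁ h₂ h₃ hc₁₂ hc₂₃ hc₃₁
end

section
/- Let P₁, P₂, P₃ be pairwise commuting non-identity n-qubit Paulis with P₁P₂ ∉ {±P₃} and G = (3I+Q)/4 where Q = P₁+P₂+P₃−P₁P₂−P₂P₃−P₃P₁+P₁P₂P₃. Define the channel representation Ĝ[P_r,P_s] = Tr(P_r G P_s G†)/2ⁿ for P_r,P_s ∈ 𝒫ₙ. Then the diagonal entry Ĝ[P_r,P_r] equals 1 if P_r commutes with all of P₁,P₂,P₃, and equals 1/2 otherwise. -/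
open Matrix Complex

namespace S17

def mul4 : Fin 4 → Fin 4 → Fin 4
  | 0, 0 => 0
  | 0, 1 => 1
  | 0, 2 => 2
  | 0, 3 => 3
  | 1, 0 => 1
  | 1, 1 => 0
  | 1, 2 => 3
  | 1, 3 => 2
  | 2, 0 => 2
  | 2, 1 => 3
  | 2, 2 => 0
  | 2, 3 => 1
  | 3, 0 => 3
  | 3, 1 => 2
  | 3, 2 => 1
  | 3, 3 => 0

noncomputable def ph : Fin 4 → Fin 4 → ℂ
  | 1, 2 => Complex.I
  | 1, 3 => -Complex.I
  | 2, 1 => -Complex.I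
  | 2, 3 => Complex.I
  | 3, 1 => Complex.I
  | 3, 2 => -Complex.I
  | _, _ => 1

noncomputable def sgn : Fin 4 → Fin 4 → ℂ
  | 1, 2 => -1
  | 1, 3 => -1
  | 2, 1 => -1
  | 2, 3 => -1
  | 3, 1 => -1
  | 3, 2 => -1
  | _, _ => 1

lemma mul4_self (a : Fin 4) : mul4 a a = 0 := by fin_cases a <;> rfl
lemma mul4_eq_zero : ∀ {a b : Fin 4}, mul4 a b = 0 ↔ a = b := by decide
lemma mul4_comm (a b : Fin 4) : mul4 a b = mul4 b a := by revert a b; decide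
lemma ph_self (a : Fin 4) : ph a a = 1 := by fin_cases a <;> rfl
lemma ph_comm (a b : Fin 4) : ph a b = sgn a b * ph b a := by
  fin_cases a <;> fin_cases b <;> simp [ph, sgn]
lemma sgn_cases (a b : Fin 4) : sgn a b = 1 ∨ sgn a b = -1 := by
  fin_cases a <;> fin_cases b <;> simp [sgn]

lemma p1_mul (a b : Fin 4) : pauli1 a * pauli1 b = ph a b • pauli1 (mul4 a b) := by
  fin_cases a <;> fin_cases b <;>
    · ext i j
      fin_cases i <;> fin_cases j <;>
        simp [pauli1, ph, mul4, Matrix.mul_apply, Fin.sum_univ_two, Matrix.one_apply]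

lemma p1_conjT (a : Fin 4) : (pauli1 a)ᴴ = pauli1 a := by
  fin_cases a <;>
    · ext i j
      fin_cases i <;> fin_cases j <;>
        simp [pauli1, Matrix.conjTranspose_apply, Matrix.one_apply]

lemma p1_trace (a : Fin 4) : Matrix.trace (pauli1 a) = if a = 0 then 2 else 0 := by
  fin_cases a <;> simp [pauli1, Matrix.trace, Fin.sum_univ_two, Matrix.one_apply]

variable {n : ℕ}

lemma tensor_mul (M N : Fin n → Matrix (Fin 2) (Fin 2) ℂ) :
    (Matrix.of fun i j : Fin n → Fin 2 => ∏ k, M k (i k) (j k)) *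
      (Matrix.of fun i j : Fin n → Fin 2 => ∏ k, N k (i k) (j k))
      = Matrix.of fun i j : Fin n → Fin 2 => ∏ k, (M k * N k) (i k) (j k) := by
  ext i j
  simp only [Matrix.mul_apply, Matrix.of_apply]
  calc ∑ m : Fin n → Fin 2, (∏ k, M k (i k) (m k)) * ∏ k, N k (m k) (j k)
      = ∑ m : Fin n → Fin 2, ∏ k, (M k (i k) (m k) * N k (m k) (j k)) := by
        simp [Finset.prod_mul_distrib]
    _ = ∏ k, ∑ x : Fin 2, M k (i k) x * N k x (j k) :=
        (Fintype.prod_sum fun k x => M k (i k) x * N k x (j k)).symm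
    _ = ∏ k, (M k * N k) (i k) (j k) := by simp [Matrix.mul_apply]

lemma tensor_trace (M : Fin n → Matrix (Fin 2) (Fin 2) ℂ) :
    Matrix.trace (Matrix.of fun i j : Fin n → Fin 2 => ∏ k, M k (i k) (j k))
      = ∏ k, Matrix.trace (M k) := by
  simp only [Matrix.trace, Matrix.diag_apply, Matrix.of_apply]
  exact (Fintype.prod_sum fun k x => M k x x).symm

lemma tensor_conjT (M : Fin n → Matrix (Fin 2) (Fin 2) ℂ) :
    (Matrix.of fun i j : Fin n → Fin 2 => ∏ k, M k (i k) (j k))ᴴ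
      = Matrix.of fun i j : Fin n → Fin 2 => ∏ k, (M k)ᴴ (i k) (j k) := by
  ext i j
  simp [Matrix.conjTranspose_apply, star_prod]

lemma nPauli_mul (f g : Fin n → Fin 4) :
    nPauli n f * nPauli n g
      = (∏ k, ph (f k) (g k)) • nPauli n (fun k => mul4 (f k) (g k)) := by
  unfold nPauli
  rw [tensor_mul]
  ext i j
  simp only [Matrix.of_apply, Matrix.smul_apply, smul_eq_mul, ← Finset.prod_mul_distrib]
  refine Finset.prod_congr rfl fun k _ => ?_
  rw [p1_mul]
  simp

lemma nPauli_zero : nPauli n (fun _ => 0) = 1 := by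
  ext i j
  simp only [nPauli, Matrix.of_apply, pauli1]
  by_cases h : i = j
  · subst h; simp [Matrix.one_apply]
  · obtain ⟨k, hk⟩ := Function.ne_iff.mp h
    rw [Matrix.one_apply_ne h]
    exact Finset.prod_eq_zero (Finset.mem_univ k) (Matrix.one_apply_ne hk)

lemma nPauli_trace (f : Fin n → Fin 4) :
    Matrix.trace (nPauli n f) = ∏ k, (if f k = 0 then (2 : ℂ) else 0) := by
  unfold nPauli
  rw [tensor_trace]
  exact Finset.prod_congr rfl fun k _ => p1_trace (f k)

lemma nPauli_trace_ne (f : Fin n → Fin 4) (k : Fin n) (hk : f k ≠ 0) :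
    Matrix.trace (nPauli n f) = 0 := by
  rw [nPauli_trace]
  exact Finset.prod_eq_zero (Finset.mem_univ k) (if_neg hk)

lemma nPauli_sq (f : Fin n → Fin 4) : nPauli n f * nPauli n f = 1 := by
  rw [nPauli_mul]
  simp [ph_self, mul4_self, nPauli_zero]

lemma nPauli_conjT (f : Fin n → Fin 4) : (nPauli n f)ᴴ = nPauli n f := by
  unfold nPauli
  rw [tensor_conjT]
  simp only [p1_conjT]

lemma nPauli_comm (f g : Fin n → Fin 4) :
    nPauli n f * nPauli n g = (∏ k, sgn (f k) (g k)) • (nPauli n g * nPauli n f) := by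
  rw [nPauli_mul, nPauli_mul]
  have h1 : (fun k => mul4 (f k) (g k)) = fun k => mul4 (g k) (f k) := by
    funext k; exact mul4_comm _ _
  rw [h1, smul_smul, ← Finset.prod_mul_distrib]
  congr 1
  exact Finset.prod_congr rfl fun k _ => ph_comm _ _

/-! ### Pauli set level lemmas -/

lemma pauli_sq {P : Matrix (Fin n → Fin 2) (Fin n → Fin 2) ℂ} (hP : P ∈ PauliSet n) :
    P * P = 1 := by
  obtain ⟨f, rfl⟩ := hP
  exact nPauli_sq f

lemma pauli_conjT {P : Matrix (Fin n → Fin 2) (Fin n → Fin 2) ℂ} (hP : P ∈ PauliSet n) :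
    Pᴴ = P := by
  obtain ⟨f, rfl⟩ := hP
  exact nPauli_conjT f

lemma pauli_dichotomy {P Q : Matrix (Fin n → Fin 2) (Fin n → Fin 2) ℂ}
    (hP : P ∈ PauliSet n) (hQ : Q ∈ PauliSet n) :
    P * Q = Q * P ∨ P * Q = -(Q * P) := by
  obtain ⟨f, rfl⟩ := hP
  obtain ⟨g, rfl⟩ := hQ
  rw [nPauli_comm f g]
  have : (∏ k, sgn (f k) (g k)) = 1 ∨ (∏ k, sgn (f k) (g k)) = -1 := by
    refine Finset.prod_induction _ (fun c => c = 1 ∨ c = -1) ?_ (Or.inl rfl)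
      (fun k _ => sgn_cases _ _)
    rintro a b (rfl | rfl) (rfl | rfl) <;> norm_num
  rcases this with h | h
  · rw [h, one_smul]; exact Or.inl rfl
  · rw [h, neg_smul, one_smul]; exact Or.inr rfl

lemma pauli_trace_ne_one {P : Matrix (Fin n → Fin 2) (Fin n → Fin 2) ℂ}
    (hP : P ∈ PauliSet n) (h : P ≠ 1) : Matrix.trace P = 0 := by
  obtain ⟨f, rfl⟩ := hP
  by_cases hf : ∀ k, f k = 0
  · exact absurd (by rw [show f = fun _ => 0 from funext hf]; exact nPauli_zero) h
  · push_neg at hf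
    obtain ⟨k, hk⟩ := hf
    exact nPauli_trace_ne f k hk

lemma pauli_trace_mul {P Q : Matrix (Fin n → Fin 2) (Fin n → Fin 2) ℂ}
    (hP : P ∈ PauliSet n) (hQ : Q ∈ PauliSet n) (h : P ≠ Q) :
    Matrix.trace (P * Q) = 0 := by
  obtain ⟨f, rfl⟩ := hP
  obtain ⟨g, rfl⟩ := hQ
  rw [nPauli_mul, Matrix.trace_smul]
  by_cases hfg : f = g
  · exact absurd (by rw [hfg]) h
  · obtain ⟨k, hk⟩ := Function.ne_iff.mp hfg
    rw [nPauli_trace_ne _ k (fun hc => hk (mul4_eq_zero.mp hc)), smul_zero]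

lemma smul_one_eq_one {c : ℂ}
    (h : c • (1 : Matrix (Fin n → Fin 2) (Fin n → Fin 2) ℂ) = 1) : c = 1 := by
  have h2 := congr_fun (congr_fun h (fun _ => 0)) (fun _ => 0)
  simpa [Matrix.smul_apply, Matrix.one_apply] using h2

lemma pauli_trace_triple {P Q R : Matrix (Fin n → Fin 2) (Fin n → Fin 2) ℂ}
    (hP : P ∈ PauliSet n) (hQ : Q ∈ PauliSet n) (hR : R ∈ PauliSet n)
    (hc : P * Q = Q * P) (h1 : P * Q ≠ R) (h2 : P * Q ≠ -R) :
    Matrix.trace (P * Q * R) = 0 := by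
  have hsq : (P * Q) * (P * Q) = 1 := by
    have e1 : (P * Q) * (P * Q) = P * (Q * P) * Q := by noncomm_ring
    rw [e1, ← hc]
    have e2 : P * (P * Q) * Q = (P * P) * (Q * Q) := by noncomm_ring
    rw [e2, pauli_sq hP, pauli_sq hQ, one_mul]
  obtain ⟨f, rfl⟩ := hP
  obtain ⟨g, rfl⟩ := hQ
  obtain ⟨h, rfl⟩ := hR
  have hPQ := nPauli_mul f g
  by_cases hmh : (fun k => mul4 (f k) (g k)) = h
  · exfalso
    rw [hPQ, hmh] at hsq h1 h2
    have hcc : ((∏ k, ph (f k) (g k)) * (∏ k, ph (f k) (g k))) •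
        (1 : Matrix (Fin n → Fin 2) (Fin n → Fin 2) ℂ) = 1 := by
      rw [Matrix.smul_mul, Matrix.mul_smul, nPauli_sq] at hsq
      rw [← smul_smul]
      exact hsq
    rcases mul_self_eq_one_iff.mp (smul_one_eq_one hcc) with hc1 | hc1
    · rw [hc1, one_smul] at h1; exact h1 rfl
    · rw [hc1, neg_one_smul] at h2; exact h2 rfl
  · rw [hPQ, Matrix.smul_mul, Matrix.trace_smul, nPauli_mul, Matrix.trace_smul]
    obtain ⟨k, hk⟩ := Function.ne_iff.mp hmh
    rw [nPauli_trace_ne _ k (fun hcon => hk (mul4_eq_zero.mp hcon)), smul_zero, smul_zero]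

/-! ### Algebraic lemmas -/

lemma mul_left_swap {x y : Matrix (Fin n → Fin 2) (Fin n → Fin 2) ℂ} (h : x * y = y * x)
    (z : Matrix (Fin n → Fin 2) (Fin n → Fin 2) ℂ) : x * (y * z) = y * (x * z) := by
  rw [← mul_assoc, h, mul_assoc]

lemma comm_aux (x y : Matrix (Fin n → Fin 2) (Fin n → Fin 2) ℂ) (h : x * y = y * x) (ε : ℂ) :
    (1 - ε • x) * (1 - y) = (1 - y) * (1 - ε • x) := by
  simp only [mul_sub, sub_mul, mul_one, one_mul, Matrix.smul_mul, Matrix.mul_smul, h]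
  abel

lemma comm_aux' (x y : Matrix (Fin n → Fin 2) (Fin n → Fin 2) ℂ) (h : x * y = y * x) :
    (1 - x) * (1 - y) = (1 - y) * (1 - x) := by
  simp only [mul_sub, sub_mul, mul_one, one_mul, h]
  abel

lemma conj_one_sub (Pr x : Matrix (Fin n → Fin 2) (Fin n → Fin 2) ℂ) (hPr : Pr * Pr = 1)
    (ε : ℂ) (hε : Pr * x = ε • (x * Pr)) :
    Pr * (1 - x) * Pr = 1 - ε • x := by
  have h1 : Pr * (1 - x) * Pr = Pr * Pr - Pr * x * Pr := by noncomm_ring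
  rw [h1, hPr, hε, Matrix.smul_mul, mul_assoc, hPr, mul_one]

lemma step_lemma (x : Matrix (Fin n → Fin 2) (Fin n → Fin 2) ℂ) (hx : x * x = 1) (ε : ℂ) :
    (1 - ε • x) * (1 - x) = (1 + ε) • (1 - x) := by
  have h1 : (1 - ε • x) * (1 - x) = (1 - x) - ε • (x * (1 - x)) := by
    rw [sub_mul, one_mul, Matrix.smul_mul]
  have h2 : x * (1 - x) = x - 1 := by rw [mul_sub, mul_one, hx]
  rw [h1, h2]
  module

lemma master (P₁ P₂ P₃ Pr : Matrix (Fin n → Fin 2) (Fin n → Fin 2) ℂ)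
    (s₁ : P₁ * P₁ = 1) (s₂ : P₂ * P₂ = 1) (s₃ : P₃ * P₃ = 1) (sr : Pr * Pr = 1)
    (H₁ : P₁ᴴ = P₁) (H₂ : P₂ᴴ = P₂) (H₃ : P₃ᴴ = P₃)
    (hc₁₂ : P₁ * P₂ = P₂ * P₁) (hc₂₃ : P₂ * P₃ = P₃ * P₂) (hc₃₁ : P₃ * P₁ = P₁ * P₃)
    (tQ : Matrix.trace (P₁ + P₂ + P₃ - P₁*P₂ - P₂*P₃ - P₃*P₁ + P₁*P₂*P₃) = 0)
    (ε₁ ε₂ ε₃ : ℂ)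
    (hε₁ : Pr * P₁ = ε₁ • (P₁ * Pr)) (hε₂ : Pr * P₂ = ε₂ • (P₂ * Pr))
    (hε₃ : Pr * P₃ = ε₃ • (P₃ * Pr)) :
    Matrix.trace (Pr * gMat P₁ P₂ P₃ * Pr * (gMat P₁ P₂ P₃)ᴴ)
      = (2^n : ℂ) * (1/2 + (1+ε₁)*(1+ε₂)*(1+ε₃)/16) := by
  set K := (1-P₁)*((1-P₂)*(1-P₃)) with hK
  have hKQ : K = 1 - (P₁ + P₂ + P₃ - P₁*P₂ - P₂*P₃ - P₃*P₁ + P₁*P₂*P₃) := by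
    rw [hK, hc₃₁]; noncomm_ring
  have hG : gMat P₁ P₂ P₃ = 1 - (1/4 : ℂ) • K := by
    unfold gMat; rw [hKQ]; module
  -- Hermitian
  have cb12 : (1-P₁)*(1-P₂) = (1-P₂)*(1-P₁) := comm_aux' _ _ hc₁₂
  have cb13 : (1-P₃)*(1-P₁) = (1-P₁)*(1-P₃) := comm_aux' _ _ hc₃₁
  have cb23 : (1-P₂)*(1-P₃) = (1-P₃)*(1-P₂) := comm_aux' _ _ hc₂₃
  have hKH : Kᴴ = K := by
    rw [hK]
    simp only [Matrix.conjTranspose_mul, Matrix.conjTranspose_sub, Matrix.conjTranspose_one,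
      H₁, H₂, H₃]
    calc (1-P₃)*(1-P₂)*(1-P₁)
        = (1-P₃)*((1-P₂)*(1-P₁)) := mul_assoc _ _ _
      _ = (1-P₃)*((1-P₁)*(1-P₂)) := by rw [← cb12]
      _ = ((1-P₃)*(1-P₁))*(1-P₂) := (mul_assoc _ _ _).symm
      _ = ((1-P₁)*(1-P₃))*(1-P₂) := by rw [cb13]
      _ = (1-P₁)*((1-P₃)*(1-P₂)) := mul_assoc _ _ _
      _ = (1-P₁)*((1-P₂)*(1-P₃)) := by rw [← cb23]
  have hGH : (gMat P₁ P₂ P₃)ᴴ = gMat P₁ P₂ P₃ := by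
    rw [hG, Matrix.conjTranspose_sub, Matrix.conjTranspose_smul, Matrix.conjTranspose_one, hKH]
    norm_num
  -- conjugation by Pr
  have hPP : ∀ X : Matrix (Fin n → Fin 2) (Fin n → Fin 2) ℂ, Pr * (Pr * X) = X :=
    fun X => by rw [← mul_assoc, sr, one_mul]
  have c₁ := conj_one_sub Pr P₁ sr ε₁ hε₁
  have c₂ := conj_one_sub Pr P₂ sr ε₂ hε₂
  have c₃ := conj_one_sub Pr P₃ sr ε₃ hε₃
  have hC : Pr * K * Pr = (1-ε₁•P₁)*((1-ε₂•P₂)*(1-ε₃•P₃)) := by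
    rw [hK]
    calc Pr * ((1-P₁)*((1-P₂)*(1-P₃))) * Pr
        = (Pr*(1-P₁)*Pr) * ((Pr*(1-P₂)*Pr) * (Pr*(1-P₃)*Pr)) := by
          simp only [mul_assoc, hPP]
      _ = (1-ε₁•P₁)*((1-ε₂•P₂)*(1-ε₃•P₃)) := by rw [c₁, c₂, c₃]
  have swA₃B₁ := comm_aux P₃ P₁ hc₃₁ ε₃
  have swA₂B₁ := comm_aux P₂ P₁ hc₁₂.symm ε₂
  have swA₃B₂ := comm_aux P₃ P₂ hc₂₃.symm ε₃
  have key : ((1-ε₁•P₁)*((1-ε₂•P₂)*(1-ε₃•P₃))) * K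
      = ((1+ε₁)*(1+ε₂)*(1+ε₃)) • K := by
    rw [hK]
    calc ((1-ε₁•P₁)*((1-ε₂•P₂)*(1-ε₃•P₃))) * ((1-P₁)*((1-P₂)*(1-P₃)))
        = (1-ε₁•P₁)*((1-ε₂•P₂)*((1-ε₃•P₃)*((1-P₁)*((1-P₂)*(1-P₃))))) := by
          simp only [mul_assoc]
      _ = (1-ε₁•P₁)*((1-ε₂•P₂)*((1-P₁)*((1-ε₃•P₃)*((1-P₂)*(1-P₃))))) := by
          rw [mul_left_swap swA₃B₁]
      _ = (1-ε₁•P₁)*((1-P₁)*((1-ε₂•P₂)*((1-ε₃•P₃)*((1-P₂)*(1-P₃))))) := by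
          rw [mul_left_swap swA₂B₁]
      _ = (1-ε₁•P₁)*((1-P₁)*((1-ε₂•P₂)*((1-P₂)*((1-ε₃•P₃)*(1-P₃))))) := by
          rw [mul_left_swap swA₃B₂]
      _ = ((1-ε₁•P₁)*(1-P₁))*(((1-ε₂•P₂)*(1-P₂))*((1-ε₃•P₃)*(1-P₃))) := by
          simp only [mul_assoc]
      _ = ((1+ε₁)•(1-P₁))*(((1+ε₂)•(1-P₂))*((1+ε₃)•(1-P₃))) := by
          rw [step_lemma P₁ s₁ ε₁, step_lemma P₂ s₂ ε₂, step_lemma P₃ s₃ ε₃]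
      _ = ((1+ε₁)*(1+ε₂)*(1+ε₃)) • ((1-P₁)*((1-P₂)*(1-P₃))) := by
          simp only [Matrix.smul_mul, Matrix.mul_smul, smul_smul, mul_assoc]
          congr 1
          ring
  have hPGP : Pr * (1 - (1/4:ℂ)•K) * Pr = 1 - (1/4:ℂ)•(Pr * K * Pr) := by
    have e : Pr * (1 - (1/4:ℂ)•K) * Pr = Pr*Pr - (1/4:ℂ)•(Pr*K*Pr) := by
      rw [mul_sub, mul_one, sub_mul, Matrix.mul_smul, Matrix.smul_mul]
    rw [e, sr]
  have key' : (Pr*K*Pr) * K = ((1+ε₁)*(1+ε₂)*(1+ε₃)) • K := by rw [hC]; exact key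
  have tC : Matrix.trace (Pr*K*Pr) = Matrix.trace K := by
    rw [Matrix.trace_mul_comm, ← mul_assoc, sr, one_mul]
  have tone : ((Fintype.card (Fin n → Fin 2) : ℂ)) = 2^n := by
    simp [Fintype.card_fun]
  have tK : Matrix.trace K = (2^n : ℂ) := by
    rw [hKQ, Matrix.trace_sub, tQ, Matrix.trace_one, sub_zero, tone]
  have expand : (1 - (1/4:ℂ)•(Pr*K*Pr))*(1 - (1/4:ℂ)•K)
      = 1 - (1/4:ℂ)•K - (1/4:ℂ)•(Pr*K*Pr) + ((1+ε₁)*(1+ε₂)*(1+ε₃)/16)•K := by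
    rw [mul_sub, mul_one, sub_mul, one_mul, Matrix.smul_mul, Matrix.mul_smul, smul_smul, key',
      smul_smul]
    module
  rw [hGH, hG, hPGP, expand, Matrix.trace_add, Matrix.trace_sub, Matrix.trace_sub,
    Matrix.trace_smul, Matrix.trace_smul, Matrix.trace_smul, tC, tK, Matrix.trace_one, tone]
  simp only [smul_eq_mul]
  ring

end S17

/-- Diagonal entries of the channel representation of G_{P₁,P₂,P₃}:
1 if P_r commutes with all of P₁,P₂,P₃, and 1/2 otherwise. -/
theorem stmt17 (n : ℕ) (P₁ P₂ P₃ Pr : Matrix (Fin n → Fin 2) (Fin n → Fin 2) ℂ)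
    (h₁ : P₁ ∈ PauliSet n) (h₂ : P₂ ∈ PauliSet n) (h₃ : P₃ ∈ PauliSet n)
    (hr : Pr ∈ PauliSet n)
    (hni₁ : P₁ ≠ 1) (hni₂ : P₂ ≠ 1) (hni₃ : P₃ ≠ 1)
    (hne₁₂ : P₁ ≠ P₂) (hne₂₃ : P₂ ≠ P₃) (hne₁₃ : P₁ ≠ P₃)
    (hc₁₂ : P₁ * P₂ = P₂ * P₁) (hc₂₃ : P₂ * P₃ = P₃ * P₂) (hc₃₁ : P₃ * P₁ = P₁ * P₃)
    (hprod : P₁ * P₂ ≠ P₃ ∧ P₁ * P₂ ≠ -P₃) :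
    (Pr * P₁ = P₁ * Pr ∧ Pr * P₂ = P₂ * Pr ∧ Pr * P₃ = P₃ * Pr →
      Matrix.trace (Pr * gMat P₁ P₂ P₃ * Pr * (gMat P₁ P₂ P₃)ᴴ) / (2 ^ n : ℂ) = 1) ∧
    (¬ (Pr * P₁ = P₁ * Pr ∧ Pr * P₂ = P₂ * Pr ∧ Pr * P₃ = P₃ * Pr) →
      Matrix.trace (Pr * gMat P₁ P₂ P₃ * Pr * (gMat P₁ P₂ P₃)ᴴ) / (2 ^ n : ℂ) = 1/2) := by
  have s₁ := S17.pauli_sq h₁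
  have s₂ := S17.pauli_sq h₂
  have s₃ := S17.pauli_sq h₃
  have sr := S17.pauli_sq hr
  have H₁ := S17.pauli_conjT h₁
  have H₂ := S17.pauli_conjT h₂
  have H₃ := S17.pauli_conjT h₃
  have tQ : Matrix.trace (P₁ + P₂ + P₃ - P₁*P₂ - P₂*P₃ - P₃*P₁ + P₁*P₂*P₃) = 0 := by
    simp only [Matrix.trace_add, Matrix.trace_sub]
    rw [S17.pauli_trace_ne_one h₁ hni₁, S17.pauli_trace_ne_one h₂ hni₂,
      S17.pauli_trace_ne_one h₃ hni₃,
      S17.pauli_trace_mul h₁ h₂ hne₁₂, S17.pauli_trace_mul h₂ h₃ hne₂₃,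
      S17.pauli_trace_mul h₃ h₁ (Ne.symm hne₁₃),
      S17.pauli_trace_triple h₁ h₂ h₃ hc₁₂ hprod.1 hprod.2]
    norm_num
  have h2n : (2:ℂ)^n ≠ 0 := pow_ne_zero _ two_ne_zero
  constructor
  · rintro ⟨e1, e2, e3⟩
    rw [S17.master P₁ P₂ P₃ Pr s₁ s₂ s₃ sr H₁ H₂ H₃ hc₁₂ hc₂₃ hc₃₁ tQ 1 1 1
      (by rw [one_smul]; exact e1) (by rw [one_smul]; exact e2) (by rw [one_smul]; exact e3)]
    rw [mul_comm, mul_div_assoc, div_self h2n]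
    norm_num
  · intro hnc
    have choose : ∀ P, P ∈ PauliSet n →
        ∃ ε : ℂ, Pr * P = ε • (P * Pr) ∧ (Pr * P ≠ P * Pr → ε = -1) := by
      intro P hP
      by_cases hcom : Pr * P = P * Pr
      · exact ⟨1, by rw [one_smul]; exact hcom, fun h => absurd hcom h⟩
      · rcases S17.pauli_dichotomy hr hP with h | h
        · exact absurd h hcom
        · exact ⟨-1, by rw [neg_smul, one_smul]; exact h, fun _ => rfl⟩
    obtain ⟨ε₁, hε₁, hb₁⟩ := choose P₁ h₁
    obtain ⟨ε₂, hε₂, hb₂⟩ := choose P₂ h₂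
    obtain ⟨ε₃, hε₃, hb₃⟩ := choose P₃ h₃
    have hμ : (1+ε₁)*(1+ε₂)*(1+ε₃) = 0 := by
      by_cases k1 : Pr*P₁ = P₁*Pr
      · by_cases k2 : Pr*P₂ = P₂*Pr
        · have k3 : Pr*P₃ ≠ P₃*Pr := fun k3 => hnc ⟨k1, k2, k3⟩
          rw [hb₃ k3]; ring
        · rw [hb₂ k2]; ring
      · rw [hb₁ k1]; ring
    rw [S17.master P₁ P₂ P₃ Pr s₁ s₂ s₃ sr H₁ H₂ H₃ hc₁₂ hc₂₃ hc₃₁ tQ ε₁ ε₂ ε₃ hε₁ hε₂ hε₃, hμ]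
    rw [mul_comm, mul_div_assoc, div_self h2n]
    norm_num
end
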